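/- Let α ∈ ℝ with α ≠ 0, and let f = (f₁,f₂) : ℝ² → ℝ² be a C² vector field compactly supported in 𝔻. Then T_α f(x) = 0 for all x ∈ ℝ² if and only if there exists a C³ scalar function ψ : ℝ² → ℝ such that f₁ = −∂̃₂ψ and f₂ = ∂̃₁ψ, where ∂̃₁ = −(1+α)u₁u₂∂₁ + (1−α)u₂²∂₂ and ∂̃₂ = (1−α)u₁²∂₁ − (1+α)u₁u₂∂₂. -/

import Mathlib

open MeasureTheory

noncomputable section

/-- Euclidean dot product on `ℝ × ℝ`. -/
def dot (a b : ℝ × ℝ) : ℝ := a.1 * b.1 + a.2 * b.2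

/-- Rotation by `π/2`: `w⊥ = (−w₂, w₁)`. -/
def perp (w : ℝ × ℝ) : ℝ × ℝ := (-w.2, w.1)

/-- The open unit disc in `ℝ²`. -/
def disc : Set (ℝ × ℝ) := {p : ℝ × ℝ | p.1 ^ 2 + p.2 ^ 2 < 1}

/-- Directional derivative along a constant vector `w`. -/
def Dc (w : ℝ × ℝ) (F : ℝ × ℝ → ℝ) (x : ℝ × ℝ) : ℝ := fderiv ℝ F x w

/-- The tilde partial derivative `∂̃₁ = −(1+α)u₁u₂∂₁ + (1−α)u₂²∂₂`. -/
def pt1 (α u₁ u₂ : ℝ) (g : ℝ × ℝ → ℝ) (x : ℝ × ℝ) : ℝ :=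
  -(1 + α) * u₁ * u₂ * fderiv ℝ g x (1, 0) + (1 - α) * u₂ ^ 2 * fderiv ℝ g x (0, 1)

/-- The tilde partial derivative `∂̃₂ = (1−α)u₁²∂₁ − (1+α)u₁u₂∂₂`. -/
def pt2 (α u₁ u₂ : ℝ) (g : ℝ × ℝ → ℝ) (x : ℝ × ℝ) : ℝ :=
  (1 - α) * u₁ ^ 2 * fderiv ℝ g x (1, 0) - (1 + α) * u₁ * u₂ * fderiv ℝ g x (0, 1)

/-- Longitudinal V-line transform with weight `α` and constant branch directions. -/
def Lc (α : ℝ) (u v : ℝ × ℝ) (f : ℝ × ℝ → ℝ × ℝ) (x : ℝ × ℝ) : ℝ :=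
  (- ∫ t in Set.Ioi (0 : ℝ), dot u (f (x + t • u))) +
    α * ∫ t in Set.Ioi (0 : ℝ), dot v (f (x + t • v))

/-- Transverse V-line transform with weight `α` and constant branch directions. -/
def Tc (α : ℝ) (u v : ℝ × ℝ) (f : ℝ × ℝ → ℝ × ℝ) (x : ℝ × ℝ) : ℝ :=
  (- ∫ t in Set.Ioi (0 : ℝ), dot (perp u) (f (x + t • u))) +
    α * ∫ t in Set.Ioi (0 : ℝ), dot (perp v) (f (x + t • v))

/-!
Write `g_w = w⊥ · f` and `R_w g x = ∫₀^∞ g (x + t w) dt`, so that `T_α f = -R_u g_u + α R_v g_v`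
and `D_w (R_w g) = -g`. Pointwise, `f = (-∂̃₂ψ, ∂̃₁ψ)` is the linear system
`g_u = -2αu₁u₂ D_u ψ`, `g_v = -2u₁u₂ D_v ψ`.

If `T_α f = 0`, then `ψ = R_u g_u / (2αu₁u₂) = R_v g_v / (2u₁u₂)` solves this system, and since its
derivatives along the basis `u, v` are `C²`, `ψ` is `C³`. Conversely, `dψ` vanishes off the support
of `f`, so `ψ` is constant, say `C`, on a half-plane that both rays `x + tu` and `x + tv`
eventually enter (`u` and `v` have the same second coordinate). Both ray integrals are then
multiples of `C - ψ x`, and they cancel in `T_α f x`.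
-/

open Set Filter Topology

section RayIntegral

variable {E F : Type*} [NormedAddCommGroup E] [NormedSpace ℝ E] [NormedAddCommGroup F]

theorem isClosedEmbedding_ray {w : E} (hw : w ≠ 0) (x : E) :
    IsClosedEmbedding fun t : ℝ => x + t • w :=
  (Homeomorph.addLeft x).isClosedEmbedding.comp (isClosedEmbedding_smul_left hw)

theorem HasCompactSupport.comp_ray {β : Type*} [Zero β] {g : E → β} (hg : HasCompactSupport g)
    {w : E} (hw : w ≠ 0) (x : E) : HasCompactSupport fun t : ℝ => g (x + t • w) :=
  hg.comp_isClosedEmbedding (isClosedEmbedding_ray hw x)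

theorem Continuous.integrable_ray {g : E → F} (hg : Continuous g) (hgs : HasCompactSupport g)
    {w : E} (hw : w ≠ 0) (x : E) : Integrable fun t : ℝ => g (x + t • w) :=
  (hg.comp (isClosedEmbedding_ray hw x).continuous).integrable_of_hasCompactSupport
    (hgs.comp_ray hw x)

theorem exists_forall_ray_notMem {S K : Set E} (hS : Bornology.IsBounded S)
    (hK : Bornology.IsBounded K) {w : E} (hw : w ≠ 0) :
    ∃ T : ℝ, ∀ x ∈ S, ∀ t : ℝ, T < t → x + t • w ∉ K := by
  obtain ⟨a, ha⟩ := hS.exists_norm_le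
  obtain ⟨b, hb⟩ := hK.exists_norm_le
  have hw' : 0 < ‖w‖ := norm_pos_iff.2 hw
  refine ⟨(a + b) / ‖w‖, fun x hx t ht hxt => ?_⟩
  have hlt : a + b < t * ‖w‖ := (div_lt_iff₀ hw').1 ht
  have hle : t * ‖w‖ ≤ a + b :=
    calc t * ‖w‖ ≤ ‖t • w‖ := by
          rw [norm_smul, Real.norm_eq_abs]; gcongr; exact le_abs_self t
      _ = ‖(x + t • w) - x‖ := by rw [add_sub_cancel_left]
      _ ≤ ‖x + t • w‖ + ‖x‖ := norm_sub_le _ _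
      _ ≤ a + b := by linarith [ha x hx, hb _ hxt]
  linarith

variable [NormedSpace ℝ F]

def rayIntegral (w : E) (g : E → F) (x : E) : F :=
  ∫ t in Ioi (0 : ℝ), g (x + t • w)

theorem hasDerivAt_ray {ψ : E → F} {x w : E} {t : ℝ} (hψ : DifferentiableAt ℝ ψ (x + t • w)) :
    HasDerivAt (fun s : ℝ => ψ (x + s • w)) (fderiv ℝ ψ (x + t • w) w) t := by
  have hline : HasDerivAt (fun s : ℝ => x + s • w) w t := by
    simpa using ((hasDerivAt_id t).smul_const w).const_add x
  exact hψ.hasFDerivAt.comp_hasDerivAt t hline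

theorem hasFDerivAt_rayIntegral {g : E → F} (hg : ContDiff ℝ 1 g)
    (hgs : HasCompactSupport g) {w : E} (hw : w ≠ 0) (x₀ : E) :
    HasFDerivAt (rayIntegral w g) (∫ t in Ioi (0 : ℝ), fderiv ℝ g (x₀ + t • w)) x₀ := by
  have hg' := hg.continuous_fderiv one_ne_zero
  obtain ⟨C, hC⟩ := hg'.bounded_above_of_compact_support (hgs.fderiv ℝ)
  obtain ⟨T, hT⟩ := exists_forall_ray_notMem Metric.isBounded_ball
    (hgs.fderiv ℝ).isCompact.isBounded hw (S := Metric.ball x₀ 1)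
  -- near `x₀` the integrand vanishes for `t > T`, so `C • 𝟙[0, T]` dominates its derivative
  refine hasFDerivAt_integral_of_dominated_of_fderiv_le (bound := (Icc 0 T).indicator fun _ => C)
    (F' := fun x t => fderiv ℝ g (x + t • w)) (Metric.ball_mem_nhds x₀ one_pos) ?_ ?_ ?_ ?_ ?_ ?_
  · exact .of_forall fun x =>
      (hg.continuous.comp (isClosedEmbedding_ray hw x).continuous).aestronglyMeasurable
  · exact (hg.continuous.integrable_ray hgs hw x₀).integrableOn
  · exact (hg'.comp (isClosedEmbedding_ray hw x₀).continuous).aestronglyMeasurable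
  · refine (ae_restrict_iff' measurableSet_Ioi).2 (.of_forall fun t ht x hx => ?_)
    by_cases htT : t ≤ T
    · rw [indicator_of_mem (show t ∈ Icc 0 T from ⟨le_of_lt ht, htT⟩)]
      exact hC _
    · rw [indicator_of_notMem fun h => htT h.2,
        image_eq_zero_of_notMem_tsupport (hT x hx t (not_le.1 htT)), norm_zero]
  · exact ((integrable_indicator_iff measurableSet_Icc).2
      (integrableOn_const measure_Icc_lt_top.ne)).restrict
  · exact .of_forall fun t x _ => (hg.differentiable one_ne_zero _).hasFDerivAt.comp x
      ((hasFDerivAt_id x).add_const (t • w))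

theorem differentiable_rayIntegral {g : E → F} (hg : ContDiff ℝ 1 g)
    (hgs : HasCompactSupport g) {w : E} (hw : w ≠ 0) : Differentiable ℝ (rayIntegral w g) :=
  fun x => (hasFDerivAt_rayIntegral hg hgs hw x).differentiableAt

variable [CompleteSpace F]

theorem integral_Ioi_fderiv_ray {ψ : E → F} (hψ : Differentiable ℝ ψ)
    {x w : E} {C : F} (hint : IntegrableOn (fun t : ℝ => fderiv ℝ ψ (x + t • w) w) (Ioi 0))
    (hlim : Tendsto (fun t : ℝ => ψ (x + t • w)) atTop (𝓝 C)) :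
    ∫ t in Ioi (0 : ℝ), fderiv ℝ ψ (x + t • w) w = C - ψ x := by
  simpa using integral_Ioi_of_hasDerivAt_of_tendsto' (fun t _ => hasDerivAt_ray (hψ _)) hint hlim

theorem fderiv_rayIntegral_apply_self {g : E → F} (hg : ContDiff ℝ 1 g)
    (hgs : HasCompactSupport g) {w : E} (hw : w ≠ 0) (x : E) :
    fderiv ℝ (rayIntegral w g) x w = -g x := by
  rw [(hasFDerivAt_rayIntegral hg hgs hw x).fderiv, ContinuousLinearMap.integral_apply
    ((hg.continuous_fderiv one_ne_zero).integrable_ray (hgs.fderiv ℝ) hw x).integrableOn]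
  have hderiv : ∀ t : ℝ, deriv (fun s : ℝ => g (x + s • w)) t = fderiv ℝ g (x + t • w) w :=
    fun t => (hasDerivAt_ray (hg.differentiable one_ne_zero _)).deriv
  have hline : ContDiff ℝ 1 fun t : ℝ => g (x + t • w) :=
    hg.comp (contDiff_const.add (contDiff_id.smul contDiff_const))
  simpa [hderiv] using (hgs.comp_ray hw x).integral_Ioi_deriv_eq hline 0

/- `ψ` is constant on the half-space `{c < ℓ}` that misses `tsupport (fderiv ℝ ψ)`, and every ray
with `0 < ℓ w` ends up in it: the constant `C` does not depend on the ray. -/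
theorem exists_forall_integral_Ioi_fderiv_ray {ψ : E → F} (hψ : ContDiff ℝ 1 ψ)
    (hψs : HasCompactSupport (fderiv ℝ ψ)) (ℓ : E →L[ℝ] ℝ) :
    ∃ C, ∀ x w, 0 < ℓ w → ∫ t in Ioi (0 : ℝ), fderiv ℝ ψ (x + t • w) w = C - ψ x := by
  obtain ⟨c, hc⟩ := hψs.isCompact.bddAbove_image ℓ.continuous.continuousOn
  have hzero : EqOn (fderiv ℝ ψ) 0 {y | c < ℓ y} := fun y hy =>
    image_eq_zero_of_notMem_tsupport fun hmem => (not_le.2 hy.out) (hc (mem_image_of_mem ℓ hmem))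
  obtain ⟨C, hC⟩ := (isOpen_lt continuous_const ℓ.continuous).exists_is_const_of_fderiv_eq_zero
    (convex_halfSpace_gt ℓ.toLinearMap.isLinear c).isPreconnected
    (hψ.differentiable one_ne_zero).differentiableOn hzero
  refine ⟨C, fun x w hw => integral_Ioi_fderiv_ray (hψ.differentiable one_ne_zero) ?_ ?_⟩
  · have hw0 : w ≠ 0 := by rintro rfl; simp at hw
    exact (Continuous.integrable_ray ((hψ.continuous_fderiv one_ne_zero).clm_apply continuous_const)
      (hψs.comp_left (g := fun L : E →L[ℝ] F => L w) rfl) hw0 x).integrableOn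
  · refine tendsto_const_nhds.congr' ?_
    filter_upwards [(tendsto_atTop_add_const_left _ (ℓ x)
      (tendsto_id.atTop_mul_const hw)).eventually_gt_atTop c] with t ht
    exact (hC _ (by simpa using ht)).symm

end RayIntegral

theorem contDiff_succ_of_fderiv_apply_of_span {E F : Type*} [NormedAddCommGroup E]
    [NormedSpace ℝ E] [FiniteDimensional ℝ E] [NormedAddCommGroup F] [NormedSpace ℝ F]
    {ψ : E → F} {n : ℕ} {s : Set E} (hs : Submodule.span ℝ s = ⊤) (hψ : Differentiable ℝ ψ)
    (h : ∀ w ∈ s, ContDiff ℝ n fun x => fderiv ℝ ψ x w) : ContDiff ℝ (n + 1) ψ := by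
  refine contDiff_succ_iff_fderiv_apply.2 ⟨hψ, by simp, fun y => ?_⟩
  have hy : y ∈ Submodule.span ℝ s := hs ▸ Submodule.mem_top
  induction hy using Submodule.span_induction with
  | mem w hw => exact h w hw
  | zero => simpa using contDiff_const
  | add y z _ _ hy hz => simpa only [map_add] using hy.add hz
  | smul a y _ hy => simpa only [map_smul] using hy.const_smul a

theorem ContinuousLinearMap.apply_prod_eq (L : ℝ × ℝ →L[ℝ] ℝ) (a b : ℝ) :
    L (a, b) = a * L (1, 0) + b * L (0, 1) := by
  have hab : ((a, b) : ℝ × ℝ) = a • ((1 : ℝ), (0 : ℝ)) + b • ((0 : ℝ), (1 : ℝ)) := by simp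
  rw [hab, map_add, map_smul, map_smul, smul_eq_mul, smul_eq_mul]

theorem span_pair_eq_top {u₁ u₂ : ℝ} (hne : u₁ * u₂ ≠ 0) :
    Submodule.span ℝ {((u₁, u₂) : ℝ × ℝ), (-u₁, u₂)} = ⊤ := by
  obtain ⟨hu₁, hu₂⟩ := mul_ne_zero_iff.1 hne
  refine Submodule.eq_top_iff'.2 fun y => Submodule.mem_span_pair.2
    ⟨(y.1 / u₁ + y.2 / u₂) / 2, (y.2 / u₂ - y.1 / u₁) / 2, ?_⟩
  ext <;> simp only [Prod.smul_mk, smul_eq_mul, mul_neg, Prod.mk_add_mk] <;> field_simp <;> ring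

theorem contDiff_dot_perp {n : WithTop ℕ∞} {f : ℝ × ℝ → ℝ × ℝ} (hf : ContDiff ℝ n f)
    (w : ℝ × ℝ) : ContDiff ℝ n fun y => dot (perp w) (f y) := by
  simp only [dot, perp]
  fun_prop

theorem HasCompactSupport.dot_perp {f : ℝ × ℝ → ℝ × ℝ} (hf : HasCompactSupport f)
    (w : ℝ × ℝ) : HasCompactSupport fun y => dot (perp w) (f y) :=
  hf.comp_left (g := dot (perp w)) (by simp [dot])

theorem Tc_eq_rayIntegral (α : ℝ) (u v : ℝ × ℝ) (f : ℝ × ℝ → ℝ × ℝ) (x : ℝ × ℝ) :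
    Tc α u v f x = -rayIntegral u (fun y => dot (perp u) (f y)) x +
      α * rayIntegral v (fun y => dot (perp v) (f y)) x :=
  rfl

section Potential

variable {α u₁ u₂ : ℝ}

theorem eq_pt_iff_dot_perp (hne : u₁ * u₂ ≠ 0) (ψ : ℝ × ℝ → ℝ) (x z : ℝ × ℝ) :
    (z.1 = -pt2 α u₁ u₂ ψ x ∧ z.2 = pt1 α u₁ u₂ ψ x) ↔
      (dot (perp (u₁, u₂)) z = -(2 * α * u₁ * u₂) * fderiv ℝ ψ x (u₁, u₂) ∧
        dot (perp (-u₁, u₂)) z = -(2 * u₁ * u₂) * fderiv ℝ ψ x (-u₁, u₂)) := by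
  obtain ⟨hu₁, hu₂⟩ := mul_ne_zero_iff.1 hne
  simp only [pt1, pt2, dot, perp, ContinuousLinearMap.apply_prod_eq (fderiv ℝ ψ x) _ u₂]
  constructor
  · rintro ⟨h₁, h₂⟩
    constructor
    · linear_combination (-u₂) * h₁ + u₁ * h₂
    · linear_combination (-u₂) * h₁ - u₁ * h₂
  · rintro ⟨h₁, h₂⟩
    constructor
    · apply mul_left_cancel₀ hu₂
      linear_combination (-1 / 2 : ℝ) * h₁ + (-1 / 2 : ℝ) * h₂
    · apply mul_left_cancel₀ hu₁
      linear_combination (1 / 2 : ℝ) * h₁ + (-1 / 2 : ℝ) * h₂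

theorem exists_potential_of_Tc_eq_zero (hα : α ≠ 0) (hne : u₁ * u₂ ≠ 0) {f : ℝ × ℝ → ℝ × ℝ}
    (hf : ContDiff ℝ 2 f) (hcs : HasCompactSupport f)
    (hT : ∀ x, Tc α (u₁, u₂) (-u₁, u₂) f x = 0) :
    ∃ ψ : ℝ × ℝ → ℝ, ContDiff ℝ 3 ψ ∧ ∀ x,
      dot (perp (u₁, u₂)) (f x) = -(2 * α * u₁ * u₂) * fderiv ℝ ψ x (u₁, u₂) ∧
        dot (perp (-u₁, u₂)) (f x) = -(2 * u₁ * u₂) * fderiv ℝ ψ x (-u₁, u₂) := by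
  obtain ⟨hu₁, hu₂⟩ := mul_ne_zero_iff.1 hne
  have hu : ((u₁, u₂) : ℝ × ℝ) ≠ 0 := by simp [hu₁]
  have hv : ((-u₁, u₂) : ℝ × ℝ) ≠ 0 := by simp [hu₁]
  set gu := fun y => dot (perp (u₁, u₂)) (f y)
  set gv := fun y => dot (perp (-u₁, u₂)) (f y)
  have hgu : ContDiff ℝ 2 gu := contDiff_dot_perp hf _
  have hgv : ContDiff ℝ 2 gv := contDiff_dot_perp hf _
  have hRu := differentiable_rayIntegral (hgu.of_le one_le_two) (hcs.dot_perp _) hu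
  have hRv := differentiable_rayIntegral (hgv.of_le one_le_two) (hcs.dot_perp _) hv
  set ψ := fun x => (2 * α * u₁ * u₂)⁻¹ * rayIntegral (u₁, u₂) gu x
  have hψ_eq : ψ = fun x => (2 * u₁ * u₂)⁻¹ * rayIntegral (-u₁, u₂) gv x := by
    funext x
    have hx := hT x
    rw [Tc_eq_rayIntegral] at hx
    simp only [ψ]
    field_simp
    linear_combination -hx
  have hψu : ∀ x, fderiv ℝ ψ x (u₁, u₂) = -((2 * α * u₁ * u₂)⁻¹ * gu x) := fun x => by
    rw [fderiv_const_mul (hRu x), smul_apply,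
      fderiv_rayIntegral_apply_self (hgu.of_le one_le_two) (hcs.dot_perp _) hu, smul_eq_mul,
      mul_neg]
  have hψv : ∀ x, fderiv ℝ ψ x (-u₁, u₂) = -((2 * u₁ * u₂)⁻¹ * gv x) := fun x => by
    rw [hψ_eq, fderiv_const_mul (hRv x), smul_apply,
      fderiv_rayIntegral_apply_self (hgv.of_le one_le_two) (hcs.dot_perp _) hv, smul_eq_mul,
      mul_neg]
  refine ⟨ψ, contDiff_succ_of_fderiv_apply_of_span (n := 2) (span_pair_eq_top hne)
    (fun x => (hRu x).const_mul _) ?_, fun x => ⟨?_, ?_⟩⟩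
  · rintro w (rfl | rfl)
    · simp only [hψu]
      exact_mod_cast (contDiff_const.mul hgu).neg
    · simp only [hψv]
      exact_mod_cast (contDiff_const.mul hgv).neg
  · show gu x = _
    rw [hψu]
    field_simp
  · show gv x = _
    rw [hψv]
    field_simp

theorem Tc_eq_zero_of_potential (hα : α ≠ 0) (hne : u₁ * u₂ ≠ 0) {f : ℝ × ℝ → ℝ × ℝ}
    (hcs : HasCompactSupport f) {ψ : ℝ × ℝ → ℝ} (hψ : ContDiff ℝ 1 ψ)
    (hrel : ∀ x, dot (perp (u₁, u₂)) (f x) = -(2 * α * u₁ * u₂) * fderiv ℝ ψ x (u₁, u₂) ∧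
        dot (perp (-u₁, u₂)) (f x) = -(2 * u₁ * u₂) * fderiv ℝ ψ x (-u₁, u₂)) (x : ℝ × ℝ) :
    Tc α (u₁, u₂) (-u₁, u₂) f x = 0 := by
  obtain ⟨hu₁, hu₂⟩ := mul_ne_zero_iff.1 hne
  have hvanish : ∀ y, f y = 0 → fderiv ℝ ψ y = 0 := fun y hy => by
    obtain ⟨h₁, h₂⟩ := hrel y
    simp only [hy, dot, Prod.fst_zero, Prod.snd_zero, mul_zero, add_zero] at h₁ h₂
    refine ContinuousLinearMap.ext_on (s := {(u₁, u₂), (-u₁, u₂)})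
      (by simp [span_pair_eq_top hne]) ?_
    rintro w (rfl | rfl)
    · simpa [hα, hu₁, hu₂] using h₁.symm
    · simpa [hu₁, hu₂] using h₂.symm
  have hψs : HasCompactSupport (fderiv ℝ ψ) :=
    hcs.mono' fun y hy => subset_tsupport _ fun hfy => hy (hvanish y hfy)
  obtain ⟨C, hC⟩ :=
    exists_forall_integral_Ioi_fderiv_ray hψ hψs (u₂ • ContinuousLinearMap.snd ℝ ℝ ℝ)
  have hpos : 0 < u₂ * u₂ := mul_self_pos.2 hu₂
  have hRu : rayIntegral (u₁, u₂) (fun y => dot (perp (u₁, u₂)) (f y)) x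
      = -(2 * α * u₁ * u₂) * (C - ψ x) := by
    simp only [rayIntegral, fun y => (hrel y).1, integral_const_mul]
    rw [hC x _ (by simpa using hpos)]
  have hRv : rayIntegral (-u₁, u₂) (fun y => dot (perp (-u₁, u₂)) (f y)) x
      = -(2 * u₁ * u₂) * (C - ψ x) := by
    simp only [rayIntegral, fun y => (hrel y).2, integral_const_mul]
    rw [hC x _ (by simpa using hpos)]
  rw [Tc_eq_rayIntegral, hRu, hRv]
  ring

end Potential

theorem stmt16_general (α : ℝ) (hα : α ≠ 0) (u₁ u₂ : ℝ)
    (hne : u₁ * u₂ ≠ 0)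
    (f : ℝ × ℝ → ℝ × ℝ) (hf : ContDiff ℝ 2 f)
    (hcs : HasCompactSupport f) :
    (∀ x, Tc α (u₁, u₂) (-u₁, u₂) f x = 0) ↔
      ∃ ψ : ℝ × ℝ → ℝ, ContDiff ℝ 3 ψ ∧
        (∀ x, (f x).1 = -(pt2 α u₁ u₂ ψ x)) ∧ (∀ x, (f x).2 = pt1 α u₁ u₂ ψ x) := by
  simp only [← forall_and, eq_pt_iff_dot_perp hne]
  refine ⟨exists_potential_of_Tc_eq_zero hα hne hf hcs, ?_⟩
  rintro ⟨ψ, hψ, hrel⟩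
  exact Tc_eq_zero_of_potential hα hne hcs (hψ.of_le (by norm_num)) hrel

theorem stmt16 (α : ℝ) (hα : α ≠ 0) (u₁ u₂ : ℝ)
    (hunit : u₁ ^ 2 + u₂ ^ 2 = 1) (hne : u₁ * u₂ ≠ 0)
    (f : ℝ × ℝ → ℝ × ℝ) (hf : ContDiff ℝ 2 f)
    (hcs : HasCompactSupport f) (hsupp : tsupport f ⊆ disc) :
    (∀ x, Tc α (u₁, u₂) (-u₁, u₂) f x = 0) ↔
      ∃ ψ : ℝ × ℝ → ℝ, ContDiff ℝ 3 ψ ∧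
        (∀ x, (f x).1 = -(pt2 α u₁ u₂ ψ x)) ∧ (∀ x, (f x).2 = pt1 α u₁ u₂ ψ x) :=
  stmt16_general α hα u₁ u₂ hne f hf hcs

end
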